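/- arXiv:0708.2114 — 2 statements merged into one kernel-verified Lean document; each statement's English description precedes it below -/
import Mathlib

section
/- Let ρ be a rotation of the plane ℝ² about a center c by angle α with 0 < α < 2π, and let p ≠ c. Then every point x satisfying dist x p ≤ dist x (ρ p) and dist x p ≤ dist x (ρ⁻¹ p) lies in the closed angular sector with apex c, angular width α, centered at the ray from c through p (i.e., the set of points whose angle at c measured from the ray cp lies in [-α/2, α/2], together with c itself). -/
/-!
Dividing by `p - c` moves `c` to `0`, `p` to `1` and `ρ^{±1} p` to `e^{±iα}`. A point
`w = ‖w‖ e^{iθ}` is at least as close to `1` as to the unit vector `e^{iβ}` exactly when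
`cos (θ - β) ≤ cos θ`. For `β = α ∈ (0, 2π)` the sum-to-product formula turns this into
`sin (θ - α/2) ≤ 0`, which for `θ ∈ (-π, π]` means `θ ≤ α/2`; the case `β = -α` is the same
statement for `-θ`.
-/

open Complex ComplexConjugate

theorem dist_add_mul_sub (c p x z : ℂ) (hp : p ≠ c) :
    dist x (c + z * (p - c)) = ‖p - c‖ * ‖(x - c) / (p - c) - z‖ := by
  rw [dist_eq, ← norm_mul, mul_sub (p - c), mul_div_cancel₀ _ (sub_ne_zero.mpr hp)]
  ring_nf

theorem norm_sub_one_le_norm_sub_iff {w u : ℂ} (hu : ‖u‖ = 1) :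
    ‖w - 1‖ ≤ ‖w - u‖ ↔ (w * conj u).re ≤ w.re := by
  rw [← sq_le_sq₀ (norm_nonneg _) (norm_nonneg _), Complex.sq_norm, Complex.sq_norm,
    normSq_sub, normSq_sub, normSq_eq_norm_sq u, hu]
  simp only [map_one, mul_one]
  constructor <;> intro h <;> linarith

theorem re_mul_conj_exp_mul_I (w : ℂ) (β : ℝ) :
    (w * conj (exp (β * I))).re = ‖w‖ * Real.cos (arg w - β) := by
  rw [← exp_conj, map_mul, conj_ofReal, conj_I, mul_neg, ← neg_mul, ← ofReal_neg, exp_mul_I,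
    ← ofReal_cos, ← ofReal_sin, mul_re]
  simp only [add_re, ofReal_re, mul_re, I_re, ofReal_im, I_im, add_im, mul_im, Real.cos_neg,
    Real.sin_neg]
  rw [Real.cos_sub, ← norm_mul_cos_arg w, ← norm_mul_sin_arg w]
  ring

theorem norm_sub_one_le_norm_sub_exp_iff {w : ℂ} (hw : w ≠ 0) (β : ℝ) :
    ‖w - 1‖ ≤ ‖w - exp (β * I)‖ ↔ Real.cos (arg w - β) ≤ Real.cos (arg w) := by
  rw [norm_sub_one_le_norm_sub_iff (norm_exp_ofReal_mul_I β), re_mul_conj_exp_mul_I,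
    ← norm_mul_cos_arg w, mul_le_mul_iff_right₀ (norm_pos_iff.mpr hw)]

theorem cos_sub_le_cos_iff {θ α : ℝ} (hα : 0 < α) (hα' : α < 2 * Real.pi) :
    Real.cos (θ - α) ≤ Real.cos θ ↔ Real.sin (θ - α / 2) ≤ 0 := by
  have hsin : 0 < Real.sin (α / 2) := Real.sin_pos_of_pos_of_lt_pi (by linarith) (by linarith)
  have h := Real.cos_sub_cos θ (θ - α)
  rw [show (θ + (θ - α)) / 2 = θ - α / 2 by ring, show (θ - (θ - α)) / 2 = α / 2 by ring] at h
  rw [← sub_nonneg, h]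
  constructor <;> intro h' <;> nlinarith

theorem le_half_of_cos_sub_le_cos {θ α : ℝ} (hα : 0 < α) (hα' : α < 2 * Real.pi)
    (hθ : θ ≤ Real.pi) (h : Real.cos (θ - α) ≤ Real.cos θ) : θ ≤ α / 2 := by
  by_contra! hlt
  have := Real.sin_pos_of_pos_of_lt_pi (x := θ - α / 2) (by linarith) (by linarith)
  linarith [(cos_sub_le_cos_iff hα hα').mp h]

theorem abs_le_half_of_cos_le {θ α : ℝ} (hα : 0 < α) (hα' : α < 2 * Real.pi)
    (hθ : θ ∈ Set.Ioc (-Real.pi) Real.pi) (h₁ : Real.cos (θ - α) ≤ Real.cos θ)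
    (h₂ : Real.cos (θ + α) ≤ Real.cos θ) : |θ| ≤ α / 2 := by
  refine abs_le.mpr ⟨?_, le_half_of_cos_sub_le_cos hα hα' hθ.2 h₁⟩
  have : -θ ≤ α / 2 := le_half_of_cos_sub_le_cos hα hα' (by linarith [hθ.1])
    (by rwa [Real.cos_neg, show -θ - α = -(θ + α) by ring, Real.cos_neg])
  linarith

/-- Let `ρ` be the rotation of the plane (identified with `ℂ`) about the center `c` by angle
`α ∈ (0, 2π)`, and let `p ≠ c`.  Every point `x` with `dist x p ≤ dist x (ρ p)` and
`dist x p ≤ dist x (ρ⁻¹ p)` lies in the closed angular sector with apex `c`, angular width `α`,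
centered at the ray from `c` through `p`: either `x = c`, or the signed angle of `x - c`
measured from the ray `c p` lies in `[-α/2, α/2]`. -/
theorem mem_sector_of_rotation (c p x : ℂ) (α : ℝ)
    (hα : 0 < α) (hα' : α < 2 * Real.pi) (hp : p ≠ c)
    (h₁ : dist x p ≤ dist x (c + Complex.exp (α * Complex.I) * (p - c)))
    (h₂ : dist x p ≤ dist x (c + Complex.exp (-(α : ℂ) * Complex.I) * (p - c))) :
    x = c ∨ |Complex.arg ((x - c) / (p - c))| ≤ α / 2 := by
  by_cases hx : x = c
  · exact Or.inl hx
  set w := (x - c) / (p - c)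
  have hw : w ≠ 0 := div_ne_zero (sub_ne_zero.mpr hx) (sub_ne_zero.mpr hp)
  have hdist_p : dist x p = ‖p - c‖ * ‖w - 1‖ := by
    simpa using dist_add_mul_sub c p x 1 hp
  have cos_le : ∀ β : ℝ, dist x p ≤ dist x (c + exp (β * I) * (p - c)) →
      Real.cos (arg w - β) ≤ Real.cos (arg w) := by
    intro β h
    rw [hdist_p, dist_add_mul_sub c p x _ hp] at h
    exact (norm_sub_one_le_norm_sub_exp_iff hw β).mp
      (le_of_mul_le_mul_left h (norm_pos_iff.mpr (sub_ne_zero.mpr hp)))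
  refine Or.inr (abs_le_half_of_cos_le hα hα' ⟨neg_pi_lt_arg w, arg_le_pi w⟩ (cos_le α h₁) ?_)
  simpa using cos_le (-α) (by simpa using h₂)
end

section
/- Let π : ℝ³ → ℝ² be the projection omitting the third coordinate, let G be a group of isometries of ℝ³, and let G_z ≤ G be the subgroup of elements g satisfying π∘g = g₂∘π for some isometry g₂ of ℝ² and preserving every horizontal plane {z = c}. Suppose p ∈ ℝ³ is such that for every g ∈ G, if g p has the same third coordinate as p then g ∈ G_z. Then π(Vor_{Gp}(p)) ⊆ Vor_{G_z' π(p)}(π(p)), where G_z' is the induced planar group {g₂ : g ∈ G_z}. -/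
/-! A horizontal element of `G` keeps `p` at its height, so by Pythagoras the vertical
contributions to `dist x p` and `dist x (g p)` coincide, and the inequality of the
Voronoi condition survives the projection. -/

/-- The vertical projection `ℝ³ → ℝ²` omitting the third coordinate. -/
noncomputable def projXY (x : EuclideanSpace ℝ (Fin 3)) : EuclideanSpace ℝ (Fin 2) :=
  WithLp.toLp 2 (fun i : Fin 2 => x i.castSucc)

theorem dist_sq_eq_dist_projXY_sq_add_sq (a b : EuclideanSpace ℝ (Fin 3)) :
    dist a b ^ 2 = dist (projXY a) (projXY b) ^ 2 + (a 2 - b 2) ^ 2 := by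
  simp only [PiLp.dist_sq_eq_of_L2, Fin.sum_univ_three, Fin.sum_univ_two, projXY, Real.dist_eq,
    sq_abs]
  rfl

theorem dist_projXY_le_dist_projXY_of_dist_le {x p q : EuclideanSpace ℝ (Fin 3)}
    (hpq : p 2 = q 2) (hle : dist x p ≤ dist x q) :
    dist (projXY x) (projXY p) ≤ dist (projXY x) (projXY q) := by
  have hsq := (sq_le_sq₀ dist_nonneg dist_nonneg).mpr hle
  rw [dist_sq_eq_dist_projXY_sq_add_sq, dist_sq_eq_dist_projXY_sq_add_sq, hpq] at hsq
  exact (sq_le_sq₀ dist_nonneg dist_nonneg).mp (by linarith)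

theorem projection_vor_subset_general
    (G Gz : Subgroup (EuclideanSpace ℝ (Fin 3) ≃ᵢ EuclideanSpace ℝ (Fin 3)))
    (hGz : ∀ g, g ∈ Gz ↔ g ∈ G ∧
      ∃ g₂ : EuclideanSpace ℝ (Fin 2) ≃ᵢ EuclideanSpace ℝ (Fin 2),
        (∀ x, projXY (g x) = g₂ (projXY x)) ∧ (∀ x, g x 2 = x 2))
    (p : EuclideanSpace ℝ (Fin 3)) :
    projXY '' {x | ∀ g ∈ G, dist x p ≤ dist x (g p)} ⊆
      {y | ∀ g ∈ Gz, dist y (projXY p) ≤ dist y (projXY (g p))} := by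
  rintro _ ⟨x, hx, rfl⟩ g hg
  obtain ⟨hgG, -, -, hg_height⟩ := (hGz g).mp hg
  exact dist_projXY_le_dist_projXY_of_dist_le (hg_height p).symm (hx g hgG)

/-- Let `G` be a group of isometries of `ℝ³` and let `G_z ≤ G` be the subgroup of horizontal
elements, i.e. those `g ∈ G` which commute with the projection `π = projXY` via a planar isometry
`g₂` and preserve every horizontal plane.  If every `g ∈ G` with `g p` at the same height as `p`
belongs to `G_z`, then `π (Vor_{Gp}(p)) ⊆ Vor_{G_z' π(p)}(π(p))`, where the orbit of `π p` under
the induced planar group `G_z'` is `{π (g p) : g ∈ G_z}`. -/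
theorem projection_vor_subset
    (G Gz : Subgroup (EuclideanSpace ℝ (Fin 3) ≃ᵢ EuclideanSpace ℝ (Fin 3)))
    (hGz : ∀ g, g ∈ Gz ↔ g ∈ G ∧
      ∃ g₂ : EuclideanSpace ℝ (Fin 2) ≃ᵢ EuclideanSpace ℝ (Fin 2),
        (∀ x, projXY (g x) = g₂ (projXY x)) ∧ (∀ x, g x 2 = x 2))
    (p : EuclideanSpace ℝ (Fin 3))
    (hp : ∀ g ∈ G, (g p) 2 = p 2 → g ∈ Gz) :
    projXY '' {x | ∀ g ∈ G, dist x p ≤ dist x (g p)} ⊆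
      {y | ∀ g ∈ Gz, dist y (projXY p) ≤ dist y (projXY (g p))} :=
  projection_vor_subset_general G Gz hGz p
end
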